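/- Suppose v̂ : [0,T] × (0,∞) → ℝ is continuously differentiable in t and twice continuously differentiable in Y, and satisfies the reduced HJB equation: for all (t,Y) ∈ [0,T] × (0,∞), ∂_t v̂(t,Y) + sup_{a ∈ ℝ, γ ≥ 0} [ e^{−b·t}·u(γ)·(1−F(t)) + ((a·μ + (1−a)·r)·Y − γ·(1−F(t))^C)·∂_Y v̂(t,Y) + (1/2)·σ²·a²·Y²·∂²_{YY} v̂(t,Y) ] = 0, the supremum being finite. Then the function v(t,U,Y) := (1 − F(t))·U + v̂(t,Y) satisfies the full HJB equation with w(U) = U: for all (t,U,Y) ∈ [0,T] × ℝ × (0,∞), ∂_t v + sup_{a ∈ ℝ, γ ≥ 0} [ e^{−b·t}·u(γ)·∂_U v + ((a·μ + (1−a)·r)·Y − γ·(1−F(t))^C)·∂_Y v + (1/2)·σ²·a²·Y²·∂²_{YY} v + p(t)·U ] = 0. -/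

import Mathlib

/-!
For `v = (1 - F t) U + v̂(t, Y)` one has `∂_U v = 1 - F t`, `∂_Y v = ∂_Y v̂` and `∂_YY v = ∂_YY v̂`,
so every candidate in the full Hamiltonian is the corresponding reduced candidate shifted by the
constant `p t * U`; the supremum shifts by the same constant. Since `∂_t v = -p t * U + ∂_t v̂`,
the two shifts cancel and the full equation reduces to the reduced one.
-/

noncomputable section

/-- The set over which the supremum is taken in the reduced HJB equation for
von Neumann–Morgenstern preferences `w(x) = x`. -/
def reducedHJBSetVNM (μ r b σ : ℝ) (C : ℕ) (u F : ℝ → ℝ)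
    (vhat_Y vhat_YY : ℝ → ℝ → ℝ) (t Y : ℝ) : Set ℝ :=
  {z : ℝ | ∃ a γ : ℝ, 0 ≤ γ ∧ z =
    Real.exp (-(b * t)) * u γ * (1 - F t)
      + ((a * μ + (1 - a) * r) * Y - γ * (1 - F t) ^ C) * vhat_Y t Y
      + 1 / 2 * σ ^ 2 * a ^ 2 * Y ^ 2 * vhat_YY t Y}

/-- The set over which the supremum is taken in the full HJB equation with
`w(U) = U`. -/
def fullHJBSetVNM (μ r b σ : ℝ) (C : ℕ) (u F p : ℝ → ℝ)
    (v_U v_Y v_YY : ℝ → ℝ → ℝ → ℝ) (t U Y : ℝ) : Set ℝ :=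
  {z : ℝ | ∃ a γ : ℝ, 0 ≤ γ ∧ z =
    Real.exp (-(b * t)) * u γ * v_U t U Y
      + ((a * μ + (1 - a) * r) * Y - γ * (1 - F t) ^ C) * v_Y t U Y
      + 1 / 2 * σ ^ 2 * a ^ 2 * Y ^ 2 * v_YY t U Y
      + p t * U}

theorem fullHJBSetVNM_eq_image_add_const (μ r b σ : ℝ) (C : ℕ) (u F p : ℝ → ℝ)
    (vhat_Y vhat_YY : ℝ → ℝ → ℝ) (t U Y : ℝ) :
    fullHJBSetVNM μ r b σ C u F p (fun t _ _ => 1 - F t) (fun t _ Y => vhat_Y t Y)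
        (fun t _ Y => vhat_YY t Y) t U Y =
      (· + p t * U) '' reducedHJBSetVNM μ r b σ C u F vhat_Y vhat_YY t Y := by
  ext z
  constructor
  · rintro ⟨a, γ, hγ, rfl⟩
    exact ⟨_, ⟨a, γ, hγ, rfl⟩, rfl⟩
  · rintro ⟨_, ⟨a, γ, hγ, rfl⟩, rfl⟩
    exact ⟨a, γ, hγ, rfl⟩

theorem reducedHJBSetVNM_nonempty (μ r b σ : ℝ) (C : ℕ) (u F : ℝ → ℝ)
    (vhat_Y vhat_YY : ℝ → ℝ → ℝ) (t Y : ℝ) :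
    (reducedHJBSetVNM μ r b σ C u F vhat_Y vhat_YY t Y).Nonempty :=
  ⟨_, 0, 0, le_rfl, rfl⟩

theorem stmt_14_general (μ r b σ T : ℝ)
    (C : ℕ)
    (u : ℝ → ℝ)
    (F p : ℝ → ℝ) (hF : ∀ t ∈ Set.Icc 0 T, HasDerivAt F (p t) t)
    (vhat vhat_t vhat_Y vhat_YY : ℝ → ℝ → ℝ)
    (hvt : ∀ t Y, HasDerivAt (fun s => vhat s Y) (vhat_t t Y) t)
    (hvY : ∀ t Y, HasDerivAt (fun Z => vhat t Z) (vhat_Y t Y) Y)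
    (hvYY : ∀ t Y, HasDerivAt (fun Z => vhat_Y t Z) (vhat_YY t Y) Y)
    (hbdd : ∀ t ∈ Set.Icc 0 T, ∀ Y ∈ Set.Ioi (0:ℝ),
      BddAbove (reducedHJBSetVNM μ r b σ C u F vhat_Y vhat_YY t Y))
    (hHJB : ∀ t ∈ Set.Icc 0 T, ∀ Y ∈ Set.Ioi (0:ℝ),
      vhat_t t Y + sSup (reducedHJBSetVNM μ r b σ C u F vhat_Y vhat_YY t Y) = 0) :
    ∃ v_t v_U v_Y v_YY : ℝ → ℝ → ℝ → ℝ,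
      (∀ t U Y, t ∈ Set.Icc 0 T → Y ∈ Set.Ioi (0:ℝ) →
        HasDerivAt (fun s => (1 - F s) * U + vhat s Y) (v_t t U Y) t) ∧
      (∀ t U Y, t ∈ Set.Icc 0 T → Y ∈ Set.Ioi (0:ℝ) →
        HasDerivAt (fun V => (1 - F t) * V + vhat t Y) (v_U t U Y) U) ∧
      (∀ t U Y, t ∈ Set.Icc 0 T →
        HasDerivAt (fun Z => (1 - F t) * U + vhat t Z) (v_Y t U Y) Y) ∧
      (∀ t U Y, t ∈ Set.Icc 0 T → HasDerivAt (fun Z => v_Y t U Z) (v_YY t U Y) Y) ∧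
      ∀ t ∈ Set.Icc 0 T, ∀ U : ℝ, ∀ Y ∈ Set.Ioi (0:ℝ),
        BddAbove (fullHJBSetVNM μ r b σ C u F p v_U v_Y v_YY t U Y) ∧
        v_t t U Y + sSup (fullHJBSetVNM μ r b σ C u F p v_U v_Y v_YY t U Y) = 0 := by
  refine ⟨fun t U Y => -p t * U + vhat_t t Y, fun t _ _ => 1 - F t,
    fun t _ Y => vhat_Y t Y, fun t _ Y => vhat_YY t Y, ?_, ?_, ?_, fun t _ Y _ => hvYY t Y, ?_⟩
  · intro t U Y ht _
    have hFU : HasDerivAt (fun s => (1 - F s) * U) (-p t * U) t := by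
      simpa using ((hF t ht).const_sub 1).mul_const U
    exact hFU.add (hvt t Y)
  · intro t U Y _ _
    simpa using ((hasDerivAt_id U).const_mul (1 - F t)).add_const (vhat t Y)
  · intro t U Y _
    exact (hvY t Y).const_add ((1 - F t) * U)
  · intro t ht U Y hY
    have hbdd' := hbdd t ht Y hY
    rw [fullHJBSetVNM_eq_image_add_const]
    refine ⟨(OrderIso.addRight (p t * U)).monotone.map_bddAbove hbdd', ?_⟩
    have hsSup : sSup (reducedHJBSetVNM μ r b σ C u F vhat_Y vhat_YY t Y) + p t * U =
        sSup ((· + p t * U) '' reducedHJBSetVNM μ r b σ C u F vhat_Y vhat_YY t Y) :=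
      (OrderIso.addRight (p t * U)).map_csSup' (reducedHJBSetVNM_nonempty ..) hbdd'
    rw [← hsSup]
    linarith [hHJB t ht Y hY]

/-- Dimension reduction for the HJB equation with von Neumann–Morgenstern
preferences: if `v̂` solves the reduced HJB equation on `[0,T] × (0,∞)` (with finite
supremum), then `v(t,U,Y) = (1 − F(t))·U + v̂(t,Y)` solves the full HJB equation. -/
theorem stmt_14 (μ r b σ T : ℝ) (hσ : 0 < σ) (hT : 0 < T)
    (C : ℕ) (hC : C = 0 ∨ C = 1)
    (u : ℝ → ℝ)
    (F p : ℝ → ℝ) (hF : ∀ t ∈ Set.Icc 0 T, HasDerivAt F (p t) t)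
    (hF1 : ∀ t ∈ Set.Icc 0 T, F t < 1)
    (vhat vhat_t vhat_Y vhat_YY : ℝ → ℝ → ℝ)
    (hvt : ∀ t Y, HasDerivAt (fun s => vhat s Y) (vhat_t t Y) t)
    (hvY : ∀ t Y, HasDerivAt (fun Z => vhat t Z) (vhat_Y t Y) Y)
    (hvYY : ∀ t Y, HasDerivAt (fun Z => vhat_Y t Z) (vhat_YY t Y) Y)
    (hct : Continuous fun q : ℝ × ℝ => vhat_t q.1 q.2)
    (hcY : Continuous fun q : ℝ × ℝ => vhat_Y q.1 q.2)
    (hcYY : Continuous fun q : ℝ × ℝ => vhat_YY q.1 q.2)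
    (hbdd : ∀ t ∈ Set.Icc 0 T, ∀ Y ∈ Set.Ioi (0:ℝ),
      BddAbove (reducedHJBSetVNM μ r b σ C u F vhat_Y vhat_YY t Y))
    (hHJB : ∀ t ∈ Set.Icc 0 T, ∀ Y ∈ Set.Ioi (0:ℝ),
      vhat_t t Y + sSup (reducedHJBSetVNM μ r b σ C u F vhat_Y vhat_YY t Y) = 0) :
    ∃ v_t v_U v_Y v_YY : ℝ → ℝ → ℝ → ℝ,
      (∀ t U Y, t ∈ Set.Icc 0 T → Y ∈ Set.Ioi (0:ℝ) →
        HasDerivAt (fun s => (1 - F s) * U + vhat s Y) (v_t t U Y) t) ∧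
      (∀ t U Y, t ∈ Set.Icc 0 T → Y ∈ Set.Ioi (0:ℝ) →
        HasDerivAt (fun V => (1 - F t) * V + vhat t Y) (v_U t U Y) U) ∧
      (∀ t U Y, t ∈ Set.Icc 0 T →
        HasDerivAt (fun Z => (1 - F t) * U + vhat t Z) (v_Y t U Y) Y) ∧
      (∀ t U Y, t ∈ Set.Icc 0 T → HasDerivAt (fun Z => v_Y t U Z) (v_YY t U Y) Y) ∧
      ∀ t ∈ Set.Icc 0 T, ∀ U : ℝ, ∀ Y ∈ Set.Ioi (0:ℝ),
        BddAbove (fullHJBSetVNM μ r b σ C u F p v_U v_Y v_YY t U Y) ∧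
        v_t t U Y + sSup (fullHJBSetVNM μ r b σ C u F p v_U v_Y v_YY t U Y) = 0 :=
  stmt_14_general μ r b σ T C u F p hF vhat vhat_t vhat_Y vhat_YY hvt hvY hvYY hbdd hHJB

end
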